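/- The Hencky–Mises type law σ(τ) = ((λ + μ/2) − (μ/2)(1 + dev(τ))^{−1/2}) tr(τ) I + μ(1 + (1 + dev(τ))^{−1/2}) τ, with λ, μ > 0 and dev(τ) = tr(τ²) − (1/d) tr(τ)², satisfies σ(0) = 0 and the growth bound ‖σ(τ)‖ ≤ (d(λ + μ) + 2μ)‖τ‖ for all symmetric τ. -/

import Mathlib

/-- Frobenius inner product of two matrices. -/
def frob {d : ℕ} (A B : Matrix (Fin d) (Fin d) ℝ) : ℝ :=
  ∑ i : Fin d, ∑ j : Fin d, A i j * B i j

/-- Frobenius norm of a matrix. -/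
noncomputable def frobNorm {d : ℕ} (A : Matrix (Fin d) (Fin d) ℝ) : ℝ :=
  Real.sqrt (frob A A)

/-- Deviatoric quantity `dev(τ) = tr(τ²) − (1/d) tr(τ)²`. -/
noncomputable def dev {d : ℕ} (τ : Matrix (Fin d) (Fin d) ℝ) : ℝ :=
  Matrix.trace (τ * τ) - (1 / (d : ℝ)) * (Matrix.trace τ) ^ 2

/-!
For symmetric `τ` we have `tr(τ²) = ‖τ‖²` and, by Cauchy–Schwarz on the diagonal,
`tr(τ)² ≤ d ‖τ‖²`; hence `dev τ ≥ 0` and `s = (1 + dev τ)^{-1/2} ∈ [0, 1]`. The two coefficients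
of the law are then bounded by `λ + μ` and `2μ`, and the triangle inequality together with
`‖I‖ = √d` and `|tr τ| ≤ √d ‖τ‖` gives the growth bound.
-/

attribute [local instance] Matrix.frobeniusSeminormedAddCommGroup Matrix.frobeniusNormSMulClass

namespace Matrix

variable {m n α : Type*} [Fintype m] [Fintype n]

theorem frobenius_norm_sq [SeminormedAddCommGroup α] (A : Matrix m n α) :
    ‖A‖ ^ 2 = ∑ i, ∑ j, ‖A i j‖ ^ 2 := by
  rw [frobenius_norm_def, ← Real.sqrt_eq_rpow, Real.sq_sqrt (by positivity)]
  simp_rw [Real.rpow_two]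

theorem norm_trace_le_sqrt_card_mul_frobenius_norm [SeminormedAddCommGroup α]
    (A : Matrix n n α) : ‖trace A‖ ≤ √(Fintype.card n) * ‖A‖ := by
  have hdiag : ∑ i, ‖A i i‖ ^ 2 ≤ ‖A‖ ^ 2 := by
    rw [frobenius_norm_sq]
    gcongr with i
    exact Finset.single_le_sum (f := fun j => ‖A i j‖ ^ 2) (fun _ _ => by positivity)
      (Finset.mem_univ i)
  refine (pow_le_pow_iff_left₀ (norm_nonneg _) (by positivity) two_ne_zero).1 ?_
  calc ‖trace A‖ ^ 2 ≤ (∑ i, ‖A i i‖) ^ 2 := by gcongr; exact norm_sum_le _ _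
    _ ≤ Fintype.card n * ∑ i, ‖A i i‖ ^ 2 := sq_sum_le_card_mul_sum_sq
    _ ≤ Fintype.card n * ‖A‖ ^ 2 := by gcongr
    _ = (√(Fintype.card n) * ‖A‖) ^ 2 := by rw [mul_pow, Real.sq_sqrt (Nat.cast_nonneg _)]

theorem frobenius_norm_one [DecidableEq n] [SeminormedAddCommGroup α] [One α] :
    ‖(1 : Matrix n n α)‖ = √(Fintype.card n) * ‖(1 : α)‖ := by
  simpa using congr_arg ((↑) : NNReal → ℝ) (frobenius_nnnorm_one (n := n) (α := α))

theorem trace_transpose_mul_self_eq_frobenius_norm_sq (A : Matrix m n ℝ) :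
    trace (Aᵀ * A) = ‖A‖ ^ 2 := by
  simp only [frobenius_norm_sq, Real.norm_eq_abs, sq_abs, trace, diag, mul_apply,
    transpose_apply]
  rw [Finset.sum_comm]
  simp_rw [sq]

theorem norm_mul_trace_smul_one_add_smul_le {𝕜 : Type*} [NormedField 𝕜] [DecidableEq n]
    (a b : 𝕜) (A : Matrix n n 𝕜) :
    ‖(a * trace A) • (1 : Matrix n n 𝕜) + b • A‖ ≤ (Fintype.card n * ‖a‖ + ‖b‖) * ‖A‖ := by
  calc ‖(a * trace A) • (1 : Matrix n n 𝕜) + b • A‖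
      ≤ ‖a‖ * ‖trace A‖ * √(Fintype.card n) + ‖b‖ * ‖A‖ := by
        refine (norm_add_le _ _).trans_eq ?_
        rw [norm_smul, norm_smul, norm_mul, frobenius_norm_one, norm_one, mul_one]
    _ ≤ ‖a‖ * (√(Fintype.card n) * ‖A‖) * √(Fintype.card n) + ‖b‖ * ‖A‖ := by
      gcongr; exact norm_trace_le_sqrt_card_mul_frobenius_norm A
    _ = (Fintype.card n * ‖a‖ + ‖b‖) * ‖A‖ := by
      linear_combination ‖a‖ * ‖A‖ * Real.mul_self_sqrt (Nat.cast_nonneg (Fintype.card n))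

end Matrix

open Matrix

theorem frobNorm_eq_norm {d : ℕ} (A : Matrix (Fin d) (Fin d) ℝ) : frobNorm A = ‖A‖ := by
  rw [frobNorm, ← Real.sqrt_sq (norm_nonneg A), frobenius_norm_sq]
  simp only [frob, Real.norm_eq_abs, sq, abs_mul_abs_self]

theorem dev_nonneg_of_isSymm {d : ℕ} {τ : Matrix (Fin d) (Fin d) ℝ} (hτ : τ.IsSymm) :
    0 ≤ dev τ := by
  have htr : trace (τ * τ) = ‖τ‖ ^ 2 := by
    rw [← trace_transpose_mul_self_eq_frobenius_norm_sq, hτ.eq]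
  have hsq : trace τ ^ 2 ≤ d * ‖τ‖ ^ 2 := by
    simpa [mul_pow] using pow_le_pow_left₀ (norm_nonneg _)
      (norm_trace_le_sqrt_card_mul_frobenius_norm τ) 2
  rw [dev, htr, sub_nonneg]
  rcases eq_or_ne d 0 with rfl | hd
  · simp
  · calc 1 / (d : ℝ) * trace τ ^ 2 ≤ 1 / d * (d * ‖τ‖ ^ 2) := by gcongr
      _ = ‖τ‖ ^ 2 := by field_simp

theorem one_div_sqrt_one_add_mem_Icc {x : ℝ} (hx : 0 ≤ x) : 1 / √(1 + x) ∈ Set.Icc 0 1 := by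
  have h1 : 1 ≤ √(1 + x) := Real.one_le_sqrt.2 (by linarith)
  exact ⟨by positivity, (div_le_one (by linarith)).2 h1⟩

theorem hencky_mises_zero_and_growth_general
    {d : ℕ} (lam mu : ℝ) (hlam : 0 < lam) (hmu : 0 < mu)
    (σ : Matrix (Fin d) (Fin d) ℝ → Matrix (Fin d) (Fin d) ℝ)
    (hσ : ∀ τ : Matrix (Fin d) (Fin d) ℝ,
      σ τ = (((lam + mu / 2) - mu / 2 * (1 / Real.sqrt (1 + dev τ))) * Matrix.trace τ) •
              (1 : Matrix (Fin d) (Fin d) ℝ)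
            + (mu * (1 + 1 / Real.sqrt (1 + dev τ))) • τ) :
    σ 0 = 0 ∧
    ∀ τ : Matrix (Fin d) (Fin d) ℝ, τ.IsSymm →
      frobNorm (σ τ) ≤ ((d : ℝ) * (lam + mu) + 2 * mu) * frobNorm τ := by
  refine ⟨by simp [hσ], fun τ hτ => ?_⟩
  obtain ⟨hs0, hs1⟩ := one_div_sqrt_one_add_mem_Icc (dev_nonneg_of_isSymm hτ)
  rw [hσ, frobNorm_eq_norm, frobNorm_eq_norm]
  refine (norm_mul_trace_smul_one_add_smul_le _ _ τ).trans ?_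
  rw [Fintype.card_fin, Real.norm_eq_abs, Real.norm_eq_abs]
  gcongr <;> exact abs_le.2 ⟨by nlinarith, by nlinarith⟩

/-- The Hencky–Mises type law
`σ(τ) = ((λ + μ/2) − (μ/2)(1 + dev τ)^{-1/2}) tr(τ) I + μ (1 + (1 + dev τ)^{-1/2}) τ`
satisfies `σ(0) = 0` and the growth bound `‖σ(τ)‖ ≤ (d(λ+μ) + 2μ) ‖τ‖`. -/
theorem hencky_mises_zero_and_growth
    {d : ℕ} (hd : 0 < d) (lam mu : ℝ) (hlam : 0 < lam) (hmu : 0 < mu)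
    (σ : Matrix (Fin d) (Fin d) ℝ → Matrix (Fin d) (Fin d) ℝ)
    (hσ : ∀ τ : Matrix (Fin d) (Fin d) ℝ,
      σ τ = (((lam + mu / 2) - mu / 2 * (1 / Real.sqrt (1 + dev τ))) * Matrix.trace τ) •
              (1 : Matrix (Fin d) (Fin d) ℝ)
            + (mu * (1 + 1 / Real.sqrt (1 + dev τ))) • τ) :
    σ 0 = 0 ∧
    ∀ τ : Matrix (Fin d) (Fin d) ℝ, τ.IsSymm →
      frobNorm (σ τ) ≤ ((d : ℝ) * (lam + mu) + 2 * mu) * frobNorm τ :=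
  hencky_mises_zero_and_growth_general lam mu hlam hmu σ hσ
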